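/- arXiv:math/9905098 — 2 statements merged into one kernel-verified Lean document; each statement's English description precedes it below -/
import Mathlib

section
/- Let G be an abelian group and let R be a G-graded ring that is gr-prime and right gr-Goldie. Then every nonzero graded right ideal I of R contains a homogeneous element a with a^n ≠ 0 for all n ≥ 1 (i.e., a non-nilpotent homogeneous element). -/
/-- The right annihilator of an element, as an additive subgroup. -/
def rAnn {R : Type*} [Ring R] (a : R) : AddSubgroup R where
  carrier := {r : R | a * r = 0}
  zero_mem' := mul_zero a
  add_mem' := by intro x y hx hy; simp only [Set.mem_setOf_eq, mul_add] at *; rw [hx, hy, add_zero]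
  neg_mem' := by intro x hx; simp only [Set.mem_setOf_eq, mul_neg] at *; rw [hx, neg_zero]

/-- A graded right ideal: an additive subgroup closed under right multiplication that
contains all homogeneous components of its elements. -/
def IsGradedRightIdeal {G R : Type*} [AddCommGroup G] [DecidableEq G] [Ring R]
    (𝒜 : G → AddSubgroup R) [GradedRing 𝒜] (I : AddSubgroup R) : Prop :=
  (∀ a ∈ I, ∀ r : R, a * r ∈ I) ∧
  (∀ a ∈ I, ∀ g : G, (DirectSum.decompose 𝒜 a g : R) ∈ I)

/-- `R` is gr-prime: for homogeneous `a, b`, `aRb = 0` implies `a = 0` or `b = 0`. -/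
def GrPrime {G R : Type*} [AddCommGroup G] [DecidableEq G] [Ring R]
    (𝒜 : G → AddSubgroup R) [GradedRing 𝒜] : Prop :=
  ∀ a b : R, SetLike.IsHomogeneousElem 𝒜 a → SetLike.IsHomogeneousElem 𝒜 b →
    (∀ r : R, a * r * b = 0) → a = 0 ∨ b = 0

/-- `R` is right gr-Goldie: ACC on right annihilators of homogeneous elements, and no
infinite direct sum of nonzero graded right ideals. -/
def GrGoldie {G R : Type*} [AddCommGroup G] [DecidableEq G] [Ring R]
    (𝒜 : G → AddSubgroup R) [GradedRing 𝒜] : Prop :=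
  (∀ f : ℕ → R, (∀ n, SetLike.IsHomogeneousElem 𝒜 (f n)) →
      ¬ StrictMono fun n => rAnn (f n)) ∧
  ¬ ∃ I : ℕ → AddSubgroup R, (∀ n, IsGradedRightIdeal 𝒜 (I n)) ∧
      (∀ n, I n ≠ ⊥) ∧ iSupIndep I

lemma mem_rAnn {R : Type*} [Ring R] {a x : R} : x ∈ rAnn a ↔ a * x = 0 := Iff.rfl

lemma pow_mul_swap {R : Type*} [Ring R] (r a : R) (k : ℕ) :
    (r * a) ^ (k + 1) = r * (a * r) ^ k * a := by
  induction k with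
  | zero => simp [pow_succ]
  | succ n ih =>
    rw [pow_succ, ih, pow_succ]
    noncomm_ring

lemma hom_pow {G R S : Type*} [AddMonoid G] [Monoid R] [SetLike S R]
    (𝒜 : G → S) [SetLike.GradedMonoid 𝒜] {a : R}
    (ha : SetLike.IsHomogeneousElem 𝒜 a) (n : ℕ) : SetLike.IsHomogeneousElem 𝒜 (a ^ n) := by
  induction n with
  | zero => simpa using SetLike.isHomogeneousElem_one 𝒜
  | succ k ih => rw [pow_succ]; exact SetLike.IsHomogeneousElem.mul ih ha

lemma exists_max_rAnn {G R : Type*} [AddCommGroup G] [DecidableEq G] [Ring R]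
    (𝒜 : G → AddSubgroup R) [GradedRing 𝒜]
    (hacc : ∀ f : ℕ → R, (∀ n, SetLike.IsHomogeneousElem 𝒜 (f n)) →
      ¬ StrictMono fun n => rAnn (f n))
    (S : Set R) (hS : ∀ x ∈ S, SetLike.IsHomogeneousElem 𝒜 x) (hne : S.Nonempty) :
    ∃ a ∈ S, ∀ b ∈ S, ¬ rAnn a < rAnn b := by
  by_contra h
  push_neg at h
  choose! g hg1 hg2 using h
  obtain ⟨a0, ha0⟩ := hne
  set f : ℕ → R := fun n => g^[n] a0 with hf
  have hmem : ∀ n, f n ∈ S := by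
    intro n; induction n with
    | zero => exact ha0
    | succ k ih =>
      have : f (k + 1) = g (f k) := Function.iterate_succ_apply' g k a0
      rw [this]; exact hg1 _ ih
  have hlt : ∀ n, rAnn (f n) < rAnn (f (n + 1)) := by
    intro n
    have h2 := hg2 _ (hmem n)
    have : f (n + 1) = g (f n) := Function.iterate_succ_apply' g n a0
    rw [this]; exact h2
  exact hacc f (fun n => hS _ (hmem n)) (strictMono_nat_of_lt_succ hlt)

/-- Every nonzero graded right ideal of a gr-prime, right gr-Goldie ring contains a
non-nilpotent homogeneous element. -/
theorem nonzero_graded_right_ideal_contains_nonnilpotent_homogeneous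
    {G R : Type*} [AddCommGroup G] [DecidableEq G] [Ring R]
    (𝒜 : G → AddSubgroup R) [GradedRing 𝒜]
    (hprime : GrPrime 𝒜) (hgoldie : GrGoldie 𝒜)
    (I : AddSubgroup R) (hI : IsGradedRightIdeal 𝒜 I) (hI0 : I ≠ ⊥) :
    ∃ a ∈ I, SetLike.IsHomogeneousElem 𝒜 a ∧ ∀ n : ℕ, 1 ≤ n → a ^ n ≠ 0 := by
  classical
  by_contra hcon
  push_neg at hcon
  -- hcon : ∀ a ∈ I, Homogeneous a → ∃ n, 1 ≤ n ∧ a ^ n = 0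
  -- Find a nonzero element of I
  obtain ⟨x, hxI, hx0⟩ : ∃ x, x ∈ I ∧ x ≠ 0 := by
    by_contra hx; push_neg at hx
    apply hI0; ext y
    simp only [AddSubgroup.mem_bot]
    exact ⟨fun hy => hx y hy, fun hy => hy ▸ I.zero_mem⟩
  -- Find a nonzero homogeneous element a₀ of I
  obtain ⟨g0, hg0⟩ : ∃ g, (DirectSum.decompose 𝒜 x g : R) ≠ 0 := by
    by_contra hall; push_neg at hall
    apply hx0
    have := DirectSum.sum_support_decompose 𝒜 x
    rw [← this]
    exact Finset.sum_eq_zero fun i _ => hall i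
  set a0 : R := (DirectSum.decompose 𝒜 x g0 : R) with ha0def
  have ha0I : a0 ∈ I := hI.2 x hxI g0
  have ha0hom : SetLike.IsHomogeneousElem 𝒜 a0 := ⟨g0, SetLike.coe_mem _⟩
  -- the set of nonzero homogeneous left multiples of a0
  set S : Set R := {y | y ≠ 0 ∧ ∃ r, SetLike.IsHomogeneousElem 𝒜 r ∧ y = r * a0} with hSdef
  have hShom : ∀ y ∈ S, SetLike.IsHomogeneousElem 𝒜 y := by
    rintro y ⟨-, r, hr, rfl⟩
    exact SetLike.IsHomogeneousElem.mul hr ha0hom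
  have hSne : S.Nonempty := ⟨a0, hg0, 1, SetLike.isHomogeneousElem_one 𝒜, (one_mul a0).symm⟩
  -- every element of S is nilpotent
  have hSnil : ∀ y ∈ S, ∃ n, y ^ (n + 1) = 0 := by
    rintro y ⟨-, r, hr, rfl⟩
    have hm : a0 * r ∈ I := hI.1 a0 ha0I r
    have hmh : SetLike.IsHomogeneousElem 𝒜 (a0 * r) := SetLike.IsHomogeneousElem.mul ha0hom hr
    obtain ⟨n, hn1, hn0⟩ := hcon (a0 * r) hm hmh
    exact ⟨n, by rw [pow_mul_swap, hn0, mul_zero, zero_mul]⟩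
  -- choose a with maximal right annihilator
  obtain ⟨a, haS, hamax⟩ := exists_max_rAnn 𝒜 hgoldie.1 S hShom hSne
  obtain ⟨haNe, r1, hr1, haeq⟩ := haS
  have hahom : SetLike.IsHomogeneousElem 𝒜 a := hShom a ⟨haNe, r1, hr1, haeq⟩
  -- key claim: a r a = 0 for all homogeneous r
  have hkey : ∀ r : R, SetLike.IsHomogeneousElem 𝒜 r → a * r * a = 0 := by
    intro r hr
    by_cases hra : r * a = 0
    · rw [mul_assoc, hra, mul_zero]
    · have hraS : r * a ∈ S :=
        ⟨hra, r * r1, SetLike.IsHomogeneousElem.mul hr hr1, by rw [haeq, mul_assoc]⟩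
      obtain ⟨n, hn⟩ := hSnil _ hraS
      have hex : ∃ k, (r * a) ^ (k + 1) = 0 := ⟨n, hn⟩
      set m := Nat.find hex with hm
      have hm0 : (r * a) ^ (m + 1) = 0 := Nat.find_spec hex
      have hmpos : 1 ≤ m := by
        rcases Nat.eq_zero_or_pos m with h0 | h
        · exfalso; apply hra; have := hm0; rw [h0] at this; simpa using this
        · exact h
      set c := (r * a) ^ m with hc
      have hcne : c ≠ 0 := by
        intro h0
        have := Nat.find_min hex (m := m - 1) (by omega)
        apply this
        rw [show m - 1 + 1 = m by omega]
        exact h0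
      have hcS : c ∈ S := by
        refine ⟨hcne, (r * a) ^ (m - 1) * (r * r1),
          SetLike.IsHomogeneousElem.mul (hom_pow 𝒜 (SetLike.IsHomogeneousElem.mul hr hahom) _)
            (SetLike.IsHomogeneousElem.mul hr hr1), ?_⟩
        rw [hc, show m = (m - 1) + 1 by omega, pow_succ]
        rw [haeq]; noncomm_ring
      have hle : rAnn a ≤ rAnn c := by
        intro s hs
        rw [mem_rAnn] at hs ⊢
        rw [hc, show m = (m - 1) + 1 by omega, pow_succ, mul_assoc, mul_assoc, hs]
        simp [mul_assoc]
      have heq : rAnn a = rAnn c := by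
        by_contra hne
        exact hamax c hcS (lt_of_le_of_ne hle hne)
      have hmem : r * a ∈ rAnn c := by
        rw [mem_rAnn, hc, ← pow_succ]
        exact hm0
      rw [← heq, mem_rAnn] at hmem
      rw [mul_assoc]; exact hmem
  -- extend to all r by decomposing
  have hall : ∀ s : R, a * s * a = 0 := by
    intro s
    have hds := DirectSum.sum_support_decompose 𝒜 s
    calc a * s * a
        = ∑ i ∈ (DirectSum.decompose 𝒜 s).support, a * (DirectSum.decompose 𝒜 s i : R) * a := by
          rw [← Finset.sum_mul, ← Finset.mul_sum, hds]
      _ = 0 := Finset.sum_eq_zero fun i _ => hkey _ ⟨i, SetLike.coe_mem _⟩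
  rcases hprime a a hahom hahom hall with h | h
  · exact haNe h
  · exact haNe h
end

section
/- Let G be an abelian group and let R be a G-graded ring that is gr-prime and right gr-Goldie. Then the right gr-singular ideal of R is zero; that is, every homogeneous element x ∈ R whose right annihilator is a gr-essential graded right ideal satisfies x = 0. -/
/-- The right ideal `aR` generated by `a` (in a unital ring), as an additive subgroup. -/
def mulLeftRange {R : Type*} [Ring R] (a : R) : AddSubgroup R where
  carrier := Set.range (fun r : R => a * r)
  zero_mem' := ⟨0, mul_zero a⟩
  add_mem' := by rintro x y ⟨r, rfl⟩ ⟨s, rfl⟩; exact ⟨r + s, by simp [mul_add]⟩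
  neg_mem' := by rintro x ⟨r, rfl⟩; exact ⟨-r, by simp [mul_neg]⟩

/-- A graded right ideal `I` is gr-essential if it meets every nonzero graded right
ideal nontrivially. -/
def GrEssential {G R : Type*} [AddCommGroup G] [DecidableEq G] [Ring R]
    (𝒜 : G → AddSubgroup R) [GradedRing 𝒜] (I : AddSubgroup R) : Prop :=
  IsGradedRightIdeal 𝒜 I ∧
  ∀ K : AddSubgroup R, IsGradedRightIdeal 𝒜 K → K ≠ ⊥ → I ⊓ K ≠ ⊥

/-- A graded right ideal `M` is gr-uniform if it is nonzero and any two nonzero graded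
right ideals contained in `M` intersect nontrivially. -/
def GrUniform {G R : Type*} [AddCommGroup G] [DecidableEq G] [Ring R]
    (𝒜 : G → AddSubgroup R) [GradedRing 𝒜] (M : AddSubgroup R) : Prop :=
  M ≠ ⊥ ∧
  ∀ K L : AddSubgroup R, IsGradedRightIdeal 𝒜 K → IsGradedRightIdeal 𝒜 L →
    K ≤ M → L ≤ M → K ≠ ⊥ → L ≠ ⊥ → K ⊓ L ≠ ⊥


section Aux

open DirectSum

variable {G R : Type*} [AddCommGroup G] [DecidableEq G] [Ring R]
  (𝒜 : G → AddSubgroup R) [GradedRing 𝒜]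

lemma mem_rAnn_iff {a b : R} : b ∈ rAnn a ↔ a * b = 0 := Iff.rfl

lemma rAnn_graded {a : R} (ha : SetLike.IsHomogeneousElem 𝒜 a) :
    IsGradedRightIdeal 𝒜 (rAnn a) := by
  obtain ⟨i, hi⟩ := ha
  constructor
  · intro b hb r
    have hb' : a * b = 0 := hb
    show a * (b * r) = 0
    rw [← mul_assoc, hb', zero_mul]
  · intro b hb g
    have hb' : a * b = 0 := hb
    show a * (DirectSum.decompose 𝒜 b g : R) = 0
    have h2 := DirectSum.coe_decompose_mul_add_of_left_mem 𝒜 (j := g) hi (b := b)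
    rw [hb'] at h2
    simpa using h2.symm

lemma mulLeftRange_graded {a : R} (ha : SetLike.IsHomogeneousElem 𝒜 a) :
    IsGradedRightIdeal 𝒜 (mulLeftRange a) := by
  obtain ⟨i, hi⟩ := ha
  constructor
  · rintro b ⟨r, rfl⟩ s
    exact ⟨r * s, (mul_assoc _ _ _).symm⟩
  · rintro b ⟨r, rfl⟩ g
    refine ⟨DirectSum.decompose 𝒜 r (-i + g), ?_⟩
    show a * ((DirectSum.decompose 𝒜 r (-i + g) : R)) = (DirectSum.decompose 𝒜 (a * r) g : R)
    have h2 := DirectSum.coe_decompose_mul_add_of_left_mem 𝒜 (j := -i + g) hi (b := r)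
    rw [add_neg_cancel_left] at h2
    exact h2.symm

lemma GrEssential.mono {I J : AddSubgroup R} (hI : GrEssential 𝒜 I)
    (hJ : IsGradedRightIdeal 𝒜 J) (hIJ : I ≤ J) : GrEssential 𝒜 J := by
  refine ⟨hJ, fun K hK hKne h => ?_⟩
  exact hI.2 K hK hKne (le_bot_iff.mp (le_trans (inf_le_inf_right K hIJ) h.le))

lemma exists_homog_sandwich {a b r : R} (h : a * r * b ≠ 0) :
    ∃ c, SetLike.IsHomogeneousElem 𝒜 c ∧ a * c * b ≠ 0 := by
  classical
  by_contra hc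
  push_neg at hc
  apply h
  conv_lhs => rw [← DirectSum.sum_support_decompose 𝒜 r]
  rw [Finset.mul_sum, Finset.sum_mul]
  refine Finset.sum_eq_zero fun g _ => ?_
  exact hc _ ⟨g, SetLike.coe_mem _⟩

lemma gr_step (hprime : GrPrime 𝒜) {x a : R} (hxess : GrEssential 𝒜 (rAnn x))
    (ha : SetLike.IsHomogeneousElem 𝒜 a) (hane : a ≠ 0) (hle : rAnn x ≤ rAnn a) :
    ∃ b, SetLike.IsHomogeneousElem 𝒜 b ∧ b ≠ 0 ∧ rAnn x ≤ rAnn b ∧ rAnn a < rAnn b := by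
  have haess : GrEssential 𝒜 (rAnn a) :=
    GrEssential.mono 𝒜 hxess (rAnn_graded 𝒜 ha) hle
  have hex : ¬ ∀ r, a * r * a = 0 := fun h => (hprime a a ha ha h).elim hane hane
  push_neg at hex
  obtain ⟨r, hr⟩ := hex
  obtain ⟨c, hc, hacane⟩ := exists_homog_sandwich 𝒜 hr
  have hca : c * a ≠ 0 := by
    intro h
    apply hacane
    rw [mul_assoc, h, mul_zero]
  have hKne : mulLeftRange (c * a) ≠ ⊥ := by
    intro h
    apply hca
    have : c * a ∈ mulLeftRange (c * a) := ⟨1, mul_one _⟩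
    rw [h] at this
    exact this
  have hmeet := haess.2 (mulLeftRange (c * a)) (mulLeftRange_graded 𝒜 (SetLike.IsHomogeneousElem.mul hc ha)) hKne
  rw [AddSubgroup.ne_bot_iff_exists_ne_zero] at hmeet
  obtain ⟨⟨z, hz⟩, hzne⟩ := hmeet
  have hzne' : z ≠ 0 := fun h => hzne (by simpa using h)
  obtain ⟨hz1, s, hs⟩ := hz
  -- hz1 : z ∈ rAnn a, hs : c * a * s = z
  refine ⟨a * c * a, SetLike.IsHomogeneousElem.mul (SetLike.IsHomogeneousElem.mul ha hc) ha, hacane, ?_, ?_⟩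
  · intro t ht
    have ht' : a * t = 0 := hle ht
    show a * c * a * t = 0
    rw [mul_assoc, ht', mul_zero]
  · rw [SetLike.lt_iff_le_and_exists]
    constructor
    · intro t ht
      have ht' : a * t = 0 := ht
      show a * c * a * t = 0
      rw [mul_assoc, ht', mul_zero]
    · refine ⟨s, ?_, ?_⟩
      · show a * c * a * s = 0
        have hz0 : a * z = 0 := hz1
        have hs' : c * a * s = z := hs
        calc a * c * a * s = a * (c * a * s) := by rw [mul_assoc, mul_assoc, mul_assoc c]
        _ = 0 := by rw [hs', hz0]
      · intro hsa
        have hsa' : a * s = 0 := hsa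
        have hs' : c * a * s = z := hs
        apply hzne'
        rw [← hs', mul_assoc, hsa', mul_zero]

end Aux

/-- The right gr-singular ideal of a gr-prime, right gr-Goldie ring is zero: every
homogeneous element whose right annihilator is gr-essential is zero. -/
theorem gr_singular_ideal_eq_zero
    {G R : Type*} [AddCommGroup G] [DecidableEq G] [Ring R]
    (𝒜 : G → AddSubgroup R) [GradedRing 𝒜]
    (hprime : GrPrime 𝒜) (hgoldie : GrGoldie 𝒜)
    (x : R) (hx : SetLike.IsHomogeneousElem 𝒜 x) (hess : GrEssential 𝒜 (rAnn x)) :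
    x = 0 := by
  by_contra hne
  have key : ∀ p : {a : R // SetLike.IsHomogeneousElem 𝒜 a ∧ a ≠ 0 ∧ rAnn x ≤ rAnn a},
      ∃ q : {a : R // SetLike.IsHomogeneousElem 𝒜 a ∧ a ≠ 0 ∧ rAnn x ≤ rAnn a},
        rAnn (p : R) < rAnn (q : R) := by
    rintro ⟨a, ha, hane, hle⟩
    obtain ⟨b, hb, hbne, hble, hlt⟩ := gr_step 𝒜 hprime hess ha hane hle
    exact ⟨⟨b, hb, hbne, hble⟩, hlt⟩
  choose next hnext using key
  let f : ℕ → {a : R // SetLike.IsHomogeneousElem 𝒜 a ∧ a ≠ 0 ∧ rAnn x ≤ rAnn a} :=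
    fun n => Nat.rec ⟨x, hx, hne, le_refl _⟩ (fun _ p => next p) n
  have hstep : ∀ n, f (n + 1) = next (f n) := fun _ => rfl
  have hsm : StrictMono fun n => rAnn (f n).1 := by
    apply strictMono_nat_of_lt_succ
    intro n
    show rAnn (f n).1 < rAnn (f (n + 1)).1
    rw [hstep n]
    exact hnext (f n)
  exact hgoldie.1 (fun n => (f n).1) (fun n => (f n).2.1) hsm
end
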